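/- arXiv:1805.05637 — 3 statements merged into one kernel-verified Lean document; each statement's English description precedes it below -/
import Mathlib

section
/- Let G be a countable directed graph which is cofinal and whose set NW_G of non-wandering vertices is non-empty. Then NW_G is a hereditary subset of G_V: for every arrow a with s(a) ∈ NW_G one has r(a) ∈ NW_G. -/
open MeasureTheory
open scoped ENNReal

/-- A countable directed graph: countable sets of vertices and arrows together with
source and range maps. -/
structure CDG where
  V : Type
  A : Type
  countV : Countable V
  countA : Countable A
  src : A → V
  rng : A → V

attribute [instance] CDG.countV CDG.countA

namespace CDG

/-- The space `P(G)` of infinite paths in `G`. -/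
abbrev PathSpace (G : CDG) : Type :=
  {p : ℕ → G.A // ∀ i : ℕ, G.rng (p i) = G.src (p (i + 1))}

/-- The source vertex of an infinite path. -/
def isrc {G : CDG} (p : G.PathSpace) : G.V := G.src (p.1 0)

/-- The shift map `σ` on `P(G)`. -/
def shift {G : CDG} (p : G.PathSpace) : G.PathSpace :=
  ⟨fun i => p.1 (i + 1), fun i => p.2 (i + 1)⟩

/-- A countable set carries the discrete (Borel) σ-algebra. -/
instance (G : CDG) : MeasurableSpace G.A := ⊤

/-- A finite path in `G`: a base vertex together with a (possibly empty) string of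
composable arrows starting at the base vertex.  A finite path with no arrows is a vertex. -/
structure FinPath (G : CDG) where
  base : G.V
  arrows : List G.A
  head_src : ∀ a ∈ arrows.head?, G.src a = base
  chain : arrows.Chain' fun a b => G.rng a = G.src b

namespace FinPath

variable {G : CDG}

/-- The length `|μ|` of a finite path. -/
def length (μ : FinPath G) : ℕ := μ.arrows.length

/-- The source `s(μ)` of a finite path. -/
def fsrc (μ : FinPath G) : G.V := μ.base

/-- The range `r(μ)` of a finite path. -/
def frng (μ : FinPath G) : G.V := μ.arrows.getLast?.elim μ.base G.rng

/-- A vertex, regarded as a finite path of length `0`. -/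
def ofVertex (G : CDG) (v : G.V) : FinPath G :=
  ⟨v, [], by intro a ha; simp at ha, List.isChain_nil⟩

/-- Concatenation `μδ` of composable finite paths. -/
def concat (μ δ : FinPath G) (h : δ.base = μ.frng) : FinPath G where
  base := μ.base
  arrows := μ.arrows ++ δ.arrows
  head_src := by
    intro a ha
    cases hμ : μ.arrows with
    | nil =>
        rw [hμ] at ha
        simp only [List.nil_append] at ha
        have h1 : G.src a = δ.base := δ.head_src a ha
        have h2 : μ.frng = μ.base := by simp [FinPath.frng, hμ]
        rw [h1, h, h2]
    | cons b l =>
        rw [hμ] at ha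
        simp only [List.cons_append, List.head?_cons, Option.mem_def,
          Option.some.injEq] at ha
        cases ha
        exact μ.head_src _ (by rw [hμ]; rfl)
  chain := by
    refine List.IsChain.append μ.chain δ.chain ?_
    intro x hx y hy
    rw [Option.mem_def] at hx
    have h1 : μ.frng = G.rng x := by simp [FinPath.frng, hx]
    have h2 : G.src y = δ.base := δ.head_src y hy
    rw [h2, h, h1]

end FinPath

/-- The extension of a potential `F : G_Ar → ℝ` to finite paths:
`F(μ) = Σ_{i} F(a_i)`, with `F(v) = 0` for vertices. -/
def pot {G : CDG} (F : G.A → ℝ) (μ : FinPath G) : ℝ := (μ.arrows.map F).sum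

/-- The cylinder set `Z(μ)` of a finite path `μ`. -/
def cyl {G : CDG} (μ : FinPath G) : Set G.PathSpace :=
  {p | G.src (p.1 0) = μ.base ∧
    ∀ (i : ℕ) (h : i < μ.arrows.length), p.1 i = μ.arrows.get ⟨i, h⟩}

/-- The cylinder set `Z(v)` of a vertex `v`. -/
def cylV (G : CDG) (v : G.V) : Set G.PathSpace := {p | G.src (p.1 0) = v}

/-- An `e^{βF}`-conformal measure on `P(G)`: a non-zero Borel measure giving finite
measure to each `Z(v)` and satisfying `m(σ(B ∩ Z(a))) = e^{βF(a)} m(B ∩ Z(a))`. -/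
structure IsConformal (G : CDG) (F : G.A → ℝ) (β : ℝ)
    (m : Measure G.PathSpace) : Prop where
  ne_zero : m ≠ 0
  vert_fin : ∀ v : G.V, m (cylV G v) < ⊤
  conformal : ∀ (a : G.A) (B : Set G.PathSpace), MeasurableSet B →
      m (shift '' (B ∩ {p : G.PathSpace | p.1 0 = a})) =
        ENNReal.ofReal (Real.exp (β * F a)) * m (B ∩ {p : G.PathSpace | p.1 0 = a})

/-- The set `NW_G` of non-wandering vertices: those supporting a loop. -/
def NW (G : CDG) : Set G.V :=
  {v | ∃ μ : FinPath G, 0 < μ.length ∧ μ.fsrc = v ∧ μ.frng = v}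

/-- The set `V_∞` of sinks and infinite emitters. -/
def Vinf (G : CDG) : Set G.V :=
  {v | (∀ a : G.A, G.src a ≠ v) ∨ {a : G.A | G.src a = v}.Infinite}

/-- A hereditary subset of vertices. -/
def Hereditary (G : CDG) (H : Set G.V) : Prop :=
  ∀ a : G.A, G.src a ∈ H → G.rng a ∈ H

/-- A saturated subset of vertices. -/
def Saturated (G : CDG) (H : Set G.V) : Prop :=
  ∀ v : G.V, v ∉ Vinf G → (∀ a : G.A, G.src a = v → G.rng a ∈ H) → v ∈ H

/-- `G` is cofinal when the only non-empty hereditary and saturated subset of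
vertices is the set of all vertices. -/
def Cofinal (G : CDG) : Prop :=
  ∀ H : Set G.V, H.Nonempty → Hereditary G H → Saturated G H → H = Set.univ

/-- `P(G)_rec`: the paths passing through every arrow of `NW_Ar` infinitely often. -/
def recSet (G : CDG) : Set G.PathSpace :=
  {p | ∀ a : G.A, G.src a ∈ NW G → ∀ n : ℕ, ∃ i ≥ n, p.1 i = a}

/-- `P(G)_wan`: the paths visiting every vertex at most finitely many times. -/
def wanSet (G : CDG) : Set G.PathSpace :=
  {p | ∀ v : G.V, {i : ℕ | G.src (p.1 i) = v}.Finite}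

/-- The matrix entry `A(β)^n_{v,w} = Σ_μ e^{-βF(μ)} ∈ [0,∞]`, summing over finite
paths `μ` of length `n` with `s(μ) = v` and `r(μ) = w`. -/
noncomputable def Apow (G : CDG) (F : G.A → ℝ) (β : ℝ) (n : ℕ) (v w : G.V) : ℝ≥0∞ :=
  ∑' μ : {μ : FinPath G // μ.length = n ∧ μ.fsrc = v ∧ μ.frng = w},
    ENNReal.ofReal (Real.exp (-(β * pot F μ.1)))

/-- An `A(β)`-harmonic vector: non-zero, finite, non-negative, and harmonic at
every vertex. -/
def IsHarmonicVec (G : CDG) (F : G.A → ℝ) (β : ℝ) (ψ : G.V → ℝ≥0∞) : Prop :=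
  ψ ≠ 0 ∧ (∀ v : G.V, ψ v ≠ ⊤) ∧
    ∀ v : G.V, ψ v =
      ∑' a : {a : G.A // G.src a = v},
        ENNReal.ofReal (Real.exp (-(β * F a.1))) * ψ (G.rng a.1)

end CDG

/-!
If `v` lies on a loop, the vertices that cannot reach `v` form a hereditary set, and it is
saturated because every vertex reaching `v` (including `v` itself, through its loop) emits an
arrow whose range still reaches `v`. The set misses `v`, so in a cofinal graph it is empty:
every vertex reaches every non-wandering vertex. In particular `r(a)` reaches `s(a)`, and
then `a` closes a loop at `r(a)`.
-/

namespace CDG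

open Relation

variable {G : CDG}

def Adj (G : CDG) (u w : G.V) : Prop := ∃ a : G.A, G.src a = u ∧ G.rng a = w

lemma transGen_adj_of_isChain : ∀ (a : G.A) (l : List G.A),
    (a :: l).IsChain (fun b c => G.rng b = G.src c) →
      TransGen (Adj G) (G.src a) (G.rng ((a :: l).getLast (List.cons_ne_nil a l)))
  | a, [], _ => .single ⟨a, rfl, rfl⟩
  | a, b :: l, h => by
    rw [List.isChain_cons_cons] at h
    rw [List.getLast_cons_cons]
    exact .head ⟨a, rfl, h.1⟩ (transGen_adj_of_isChain b l h.2)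

lemma exists_isChain_of_transGen_adj {u w : G.V} (h : TransGen (Adj G) u w) :
    ∃ (a : G.A) (l : List G.A), (a :: l).IsChain (fun b c => G.rng b = G.src c) ∧
      G.src a = u ∧ G.rng ((a :: l).getLast (List.cons_ne_nil a l)) = w := by
  induction h using TransGen.head_induction_on with
  | single hb =>
    obtain ⟨a, has, haw⟩ := hb
    exact ⟨a, [], List.isChain_singleton a, has, haw⟩
  | head hb _ ih =>
    obtain ⟨b, hbs, hbr⟩ := hb
    obtain ⟨a, l, hl, has, haw⟩ := ih
    exact ⟨b, a :: l, List.isChain_cons_cons.2 ⟨hbr.trans has.symm, hl⟩, hbs,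
      by rwa [List.getLast_cons_cons]⟩

lemma FinPath.frng_of_arrows_eq_cons (μ : FinPath G) {a : G.A} {l : List G.A}
    (h : μ.arrows = a :: l) : μ.frng = G.rng ((a :: l).getLast (List.cons_ne_nil a l)) := by
  rw [frng, h, List.getLast?_eq_some_getLast (List.cons_ne_nil a l)]
  rfl

lemma mem_NW_iff_transGen_adj {v : G.V} : v ∈ NW G ↔ TransGen (Adj G) v v := by
  constructor
  · rintro ⟨μ, hlen, rfl, hrng⟩
    obtain ⟨a, l, hμ⟩ := List.exists_cons_of_length_pos hlen
    have has : G.src a = μ.fsrc := μ.head_src a (by rw [hμ]; rfl)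
    have hchain := μ.chain
    rw [hμ] at hchain
    have hloop := transGen_adj_of_isChain a l hchain
    rwa [← μ.frng_of_arrows_eq_cons hμ, hrng, has] at hloop
  · intro h
    obtain ⟨a, l, hl, has, haw⟩ := exists_isChain_of_transGen_adj h
    let μ : FinPath G := ⟨v, a :: l, fun b hb => (Option.some_inj.1 hb) ▸ has, hl⟩
    exact ⟨μ, Nat.succ_pos l.length, rfl, (μ.frng_of_arrows_eq_cons rfl).trans haw⟩

lemma hereditary_not_reflTransGen_adj (v : G.V) :
    Hereditary G {u | ¬ ReflTransGen (Adj G) u v} :=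
  fun a ha hr => ha (.head ⟨a, rfl, rfl⟩ hr)

lemma saturated_not_reflTransGen_adj {v : G.V} (hv : v ∈ NW G) :
    Saturated G {u | ¬ ReflTransGen (Adj G) u v} := by
  intro u _ hout hu
  obtain ⟨w, ⟨a, rfl, rfl⟩, hw⟩ : ∃ w, Adj G u w ∧ ReflTransGen (Adj G) w v := by
    rcases hu.cases_head with rfl | h
    · exact TransGen.head'_iff.1 (mem_NW_iff_transGen_adj.1 hv)
    · exact h
  exact hout a rfl hw

lemma Cofinal.reflTransGen_adj_of_mem_NW (hG : Cofinal G) {v : G.V} (hv : v ∈ NW G)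
    (u : G.V) : ReflTransGen (Adj G) u v := by
  by_contra hu
  have huniv := hG _ ⟨u, hu⟩ (hereditary_not_reflTransGen_adj v)
    (saturated_not_reflTransGen_adj hv)
  exact (huniv ▸ Set.mem_univ v : v ∈ {u | ¬ ReflTransGen (Adj G) u v}) .refl

end CDG

open CDG in
theorem stmt3_general (G : CDG) (hcof : Cofinal G) :
    Hereditary G (NW G) :=
  fun a ha => mem_NW_iff_transGen_adj.2
    (Relation.TransGen.tail' (hcof.reflTransGen_adj_of_mem_NW ha (G.rng a)) ⟨a, rfl, rfl⟩)

open CDG in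
/-- for a cofinal graph with `NW_G ≠ ∅`, the set `NW_G` of non-wandering
vertices is hereditary. -/
theorem stmt3 (G : CDG) (hcof : Cofinal G) (hne : (NW G).Nonempty) :
    Hereditary G (NW G) :=
  stmt3_general G hcof
end

section
/- Let G be a countable directed graph which is cofinal and whose set NW_G of non-wandering vertices is non-empty. Then every infinite path eventually stays in NW_G: for every p ∈ P(G) there is an n ∈ ℕ such that s(p_i) ∈ NW_G for all i ≥ n. Equivalently, P(G) = ⋃_{μ ∈ P_f(G)} Z(μ)P(NW_G), where Z(μ)P(NW_G) = {p ∈ Z(μ) : s(p_i) ∈ NW_G for all i > |μ|}. -/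
open MeasureTheory
open scoped ENNReal

/-!
In a cofinal graph every vertex reaches every non-wandering vertex `w`: the vertices that do
not reach `w` form a hereditary saturated set missing `w`. Hence `NW_G` is hereditary. For a
non-empty hereditary `S`, the vertices all of whose infinite paths eventually stay in `S` form
a non-empty hereditary saturated set, hence all of `G_V`.
-/

open Filter Relation

theorem Filter.eventually_atTop_add_one_iff {P : ℕ → Prop} :
    (∀ᶠ i in atTop, P (i + 1)) ↔ ∀ᶠ i in atTop, P i := by
  simpa only [tendsto_principal, id, Set.mem_ofPred_eq] using
    tendsto_add_atTop_iff_nat (f := id) (l := 𝓟 {i | P i}) 1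

namespace CDG

variable {G : CDG}

def Step (G : CDG) (v w : G.V) : Prop := ∃ a : G.A, G.src a = v ∧ G.rng a = w

lemma transGen_step_of_isChain (a : G.A) (l : List G.A)
    (hl : (a :: l).IsChain fun a b => G.rng a = G.src b) :
    TransGen (Step G) (G.src a) (G.rng ((a :: l).getLast (List.cons_ne_nil a l))) := by
  induction l generalizing a with
  | nil => exact .single ⟨a, rfl, rfl⟩
  | cons b l ih =>
    obtain ⟨hab, hl⟩ := List.isChain_cons_cons.mp hl
    rw [List.getLast_cons_cons]
    exact .head ⟨a, rfl, hab⟩ (ih b hl)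

lemma exists_isChain_of_transGen_step {v w : G.V} (h : TransGen (Step G) v w) :
    ∃ (a : G.A) (l : List G.A), (a :: l).IsChain (fun a b => G.rng a = G.src b) ∧
      G.src a = v ∧ G.rng ((a :: l).getLast (List.cons_ne_nil a l)) = w := by
  induction h using TransGen.head_induction_on with
  | single h => obtain ⟨a, ha, ha'⟩ := h; exact ⟨a, [], .singleton a, ha, ha'⟩
  | head h _ ih =>
    obtain ⟨a, ha, ha'⟩ := h
    obtain ⟨b, l, hl, hb, hb'⟩ := ih
    refine ⟨a, b :: l, List.IsChain.cons_cons (ha'.trans hb.symm) hl, ha, ?_⟩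
    rwa [List.getLast_cons_cons]

lemma mem_NW_iff_transGen {v : G.V} : v ∈ NW G ↔ TransGen (Step G) v v := by
  constructor
  · rintro ⟨⟨u, _ | ⟨a, l⟩, hsrc, hl⟩, hlen, rfl, hrng⟩
    · simp [FinPath.length] at hlen
    · simp only [FinPath.frng, List.getLast?_eq_some_getLast (List.cons_ne_nil a l),
        Option.elim] at hrng
      have := transGen_step_of_isChain a l hl
      rwa [hrng, hsrc a rfl] at this
  · intro h
    obtain ⟨a, l, hl, ha, ha'⟩ := exists_isChain_of_transGen_step h
    refine ⟨⟨v, a :: l, fun b hb => ?_, hl⟩, Nat.succ_pos _, rfl, ?_⟩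
    · cases hb; exact ha
    · simpa [FinPath.frng, List.getLast?_eq_some_getLast (List.cons_ne_nil a l)] using ha'

lemma Cofinal.reflTransGen_step (hcof : Cofinal G) {w : G.V} (hw : w ∈ NW G) (v : G.V) :
    ReflTransGen (Step G) v w := by
  by_contra hv
  suffices h : {x | ¬ ReflTransGen (Step G) x w} = Set.univ from
    Set.eq_univ_iff_forall.mp h w .refl
  refine hcof _ ⟨v, hv⟩ (fun a ha hr => ha (.head ⟨a, rfl, rfl⟩ hr)) ?_
  intro x _ hall hx
  -- `x` reaches `w` in at least one step, also when `x = w`, since `w` lies on a loop.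
  have hx' : TransGen (Step G) x w := by
    rcases reflTransGen_iff_eq_or_transGen.mp hx with rfl | htrans
    · exact mem_NW_iff_transGen.mp hw
    · exact htrans
  obtain ⟨_, ⟨a, ha, rfl⟩, hr⟩ := TransGen.head'_iff.mp hx'
  exact hall a ha hr

lemma Cofinal.hereditary_NW (hcof : Cofinal G) : Hereditary G (NW G) := fun a ha =>
  mem_NW_iff_transGen.mpr (.tail' (hcof.reflTransGen_step ha _) ⟨a, rfl, rfl⟩)

def PathSpace.cons (a : G.A) (q : G.PathSpace) (h : G.rng a = G.src (q.1 0)) :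
    G.PathSpace :=
  ⟨Stream'.cons a q.1, by rintro (_ | i); exacts [h, q.2 i]⟩

lemma Hereditary.src_mem {S : Set G.V} (hS : Hereditary G S) (p : G.PathSpace)
    (hp : G.src (p.1 0) ∈ S) (i : ℕ) : G.src (p.1 i) ∈ S := by
  induction i with
  | zero => exact hp
  | succ i ih => exact p.2 i ▸ hS _ ih

lemma Cofinal.eventually_src_mem (hcof : Cofinal G) {S : Set G.V} (hne : S.Nonempty)
    (hS : Hereditary G S) (p : G.PathSpace) : ∀ᶠ i in atTop, G.src (p.1 i) ∈ S := by
  let H : Set G.V :=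
    {v | ∀ q : G.PathSpace, G.src (q.1 0) = v → ∀ᶠ i in atTop, G.src (q.1 i) ∈ S}
  have hH : H = Set.univ := by
    refine hcof H ?_ ?_ ?_
    · obtain ⟨v, hv⟩ := hne
      exact ⟨v, fun q hq => .of_forall (hS.src_mem q (hq ▸ hv))⟩
    · intro a ha q hq
      exact eventually_atTop_add_one_iff.mpr (ha (.cons a q hq.symm) rfl)
    · intro v _ hall q hq
      exact eventually_atTop_add_one_iff.mp (hall _ hq (shift q) (q.2 0).symm)
  exact Set.eq_univ_iff_forall.mp hH _ p rfl

end CDG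

open CDG in
/-- for a cofinal graph with `NW_G ≠ ∅`, every infinite path eventually
stays in `NW_G`. -/
theorem stmt5 (G : CDG) (hcof : Cofinal G) (hne : (NW G).Nonempty)
    (p : G.PathSpace) :
    ∃ n : ℕ, ∀ i ≥ n, G.src (p.1 i) ∈ NW G :=
  Filter.eventually_atTop.mp (hcof.eventually_src_mem hne hcof.hereditary_NW p)
end

section
/- Let G be a countable directed graph which is strongly connected (for every pair of vertices v, w there is a finite path of positive length from v to w), F a potential on G, and β ∈ ℝ. Then for any two vertices v, w of G: Σ_{n=0}^∞ A(β)^n_{v,v} = ∞ if and only if Σ_{n=0}^∞ A(β)^n_{w,w} = ∞. -/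
open MeasureTheory
open scoped ENNReal

/-!
Concatenating a path `w → v`, a loop at `v` of length `n` and a path `v → w`
gives `A^m_{w,v} A^n_{v,v} A^k_{v,w} ≤ A^{m+n+k}_{w,w}`. Strong connectivity makes the two
outer factors nonzero, so divergence of `Σ_n A^n_{v,v}` forces divergence of `Σ_n A^n_{w,w}`.
-/

theorem ENNReal.tsum_eq_top_of_const_mul_le_shift {a b : ℕ → ℝ≥0∞} {c : ℝ≥0∞} (k : ℕ)
    (hc : c ≠ 0) (hab : ∀ n, c * a n ≤ b (n + k)) (ha : ∑' n, a n = ⊤) :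
    ∑' n, b n = ⊤ := by
  refine top_le_iff.mp ?_
  calc ⊤ = ∑' n, c * a n := by rw [ENNReal.tsum_mul_left, ha, ENNReal.mul_top hc]
    _ ≤ ∑' n, b (n + k) := ENNReal.tsum_le_tsum hab
    _ ≤ ∑' n, b n := ENNReal.tsum_comp_le_tsum_of_injective (add_left_injective k) b

namespace CDG

namespace FinPath

variable {G : CDG}

theorem ext {μ δ : FinPath G} (hbase : μ.base = δ.base) (harrows : μ.arrows = δ.arrows) :
    μ = δ := by
  cases μ; cases δ; simp_all

theorem length_concat (μ δ : FinPath G) (h : δ.base = μ.frng) :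
    (μ.concat δ h).length = μ.length + δ.length :=
  List.length_append

theorem fsrc_concat (μ δ : FinPath G) (h : δ.base = μ.frng) :
    (μ.concat δ h).fsrc = μ.fsrc := rfl

theorem frng_concat (μ δ : FinPath G) (h : δ.base = μ.frng) :
    (μ.concat δ h).frng = δ.frng := by
  cases hδ : δ.arrows.getLast? with
  | none =>
    have hnil : δ.arrows = [] := List.getLast?_eq_none_iff.mp hδ
    simpa [frng, concat, hnil] using h.symm
  | some a =>
    have hne : δ.arrows ≠ [] := by rintro hnil; simp [hnil] at hδ
    simp [frng, concat, List.getLast?_append_of_ne_nil _ hne, hδ]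

theorem concat_inj {μ μ' δ δ' : FinPath G} {h : δ.base = μ.frng} {h' : δ'.base = μ'.frng}
    (hlen : μ.length = μ'.length) (hbase : δ.base = δ'.base)
    (heq : μ.concat δ h = μ'.concat δ' h') : μ = μ' ∧ δ = δ' := by
  obtain ⟨hμ, hδ⟩ := List.append_inj (congrArg arrows heq) hlen
  have hμbase := congrArg base heq
  exact ⟨ext hμbase hμ, ext hbase hδ⟩

end FinPath

open FinPath

variable {G : CDG}

theorem pot_concat (F : G.A → ℝ) (μ δ : FinPath G) (h : δ.base = μ.frng) :
    pot F (μ.concat δ h) = pot F μ + pot F δ := by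
  simp [pot, concat]

variable (F : G.A → ℝ) (β : ℝ)

theorem Apow_mul_le_Apow_add (m n : ℕ) (u x w : G.V) :
    Apow G F β m u x * Apow G F β n x w ≤ Apow G F β (m + n) u w := by
  let weight (μ : FinPath G) : ℝ≥0∞ := ENNReal.ofReal (Real.exp (-(β * pot F μ)))
  let S₁ := {μ : FinPath G // μ.length = m ∧ μ.fsrc = u ∧ μ.frng = x}
  let S₂ := {μ : FinPath G // μ.length = n ∧ μ.fsrc = x ∧ μ.frng = w}
  let S := {μ : FinPath G // μ.length = m + n ∧ μ.fsrc = u ∧ μ.frng = w}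
  have hcomp (p : S₁ × S₂) : p.2.1.base = p.1.1.frng := p.2.2.2.1.trans p.1.2.2.2.symm
  let glue (p : S₁ × S₂) : S :=
    ⟨p.1.1.concat p.2.1 (hcomp p), by
      rw [length_concat, fsrc_concat, frng_concat, p.1.2.1, p.2.2.1, p.1.2.2.1, p.2.2.2.2]
      exact ⟨rfl, rfl, rfl⟩⟩
  have hglue : Function.Injective glue := by
    rintro ⟨μ, δ⟩ ⟨μ', δ'⟩ heq
    obtain ⟨hμ, hδ⟩ := concat_inj (h := hcomp (μ, δ)) (h' := hcomp (μ', δ'))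
      (μ.2.1.trans μ'.2.1.symm)
      (δ.2.2.1.trans δ'.2.2.1.symm) (congrArg Subtype.val heq)
    exact Prod.ext (Subtype.ext hμ) (Subtype.ext hδ)
  have hweight (p : S₁ × S₂) : weight (glue p).1 = weight p.1.1 * weight p.2.1 := by
    simp only [weight, glue, pot_concat, mul_add, neg_add, Real.exp_add,
      ENNReal.ofReal_mul (Real.exp_nonneg _)]
  calc Apow G F β m u x * Apow G F β n x w
      = ∑' p : S₁ × S₂, weight p.1.1 * weight p.2.1 := by
        rw [ENNReal.tsum_prod (f := fun (μ : S₁) (δ : S₂) => weight μ.1 * weight δ.1)]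
        simp only [ENNReal.tsum_mul_left, ENNReal.tsum_mul_right]
        rfl
    _ = ∑' p : S₁ × S₂, weight (glue p).1 := by simp only [hweight]
    _ ≤ Apow G F β (m + n) u w :=
        ENNReal.tsum_comp_le_tsum_of_injective hglue (fun μ : S => weight μ.1)

theorem Apow_pos (μ : FinPath G) : 0 < Apow G F β μ.length μ.fsrc μ.frng :=
  lt_of_lt_of_le (by simp [Real.exp_pos])
    (ENNReal.le_tsum (⟨μ, rfl, rfl, rfl⟩ :
      {δ : FinPath G // δ.length = μ.length ∧ δ.fsrc = μ.fsrc ∧ δ.frng = μ.frng}))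

theorem tsum_Apow_eq_top_of_paths {v w : G.V} (μ δ : FinPath G)
    (hμs : μ.fsrc = w) (hμr : μ.frng = v) (hδs : δ.fsrc = v) (hδr : δ.frng = w)
    (hv : ∑' n, Apow G F β n v v = ⊤) : ∑' n, Apow G F β n w w = ⊤ := by
  subst hμs hμr
  have hδpos := Apow_pos F β δ
  rw [hδs, hδr] at hδpos
  refine ENNReal.tsum_eq_top_of_const_mul_le_shift (μ.length + δ.length)
    (mul_ne_zero (Apow_pos F β μ).ne' hδpos.ne') (fun n => ?_) hv
  calc _ = Apow G F β μ.length μ.fsrc μ.frng * Apow G F β n μ.frng μ.frng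
        * Apow G F β δ.length μ.frng μ.fsrc := mul_right_comm _ _ _
    _ ≤ Apow G F β (μ.length + n + δ.length) μ.fsrc μ.fsrc :=
        (mul_le_mul_left (Apow_mul_le_Apow_add F β _ _ _ _ _) _).trans
          (Apow_mul_le_Apow_add F β _ _ _ _ _)
    _ = _ := by rw [add_right_comm, add_comm]

end CDG

open CDG in
/-- for a strongly connected graph, `Σ_n A(β)^n_{v,v} = ∞` holds for one
vertex iff it holds for any other. -/
theorem stmt15 (G : CDG)
    (hsc : ∀ v w : G.V, ∃ μ : FinPath G, 0 < μ.length ∧ μ.fsrc = v ∧ μ.frng = w)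
    (F : G.A → ℝ) (β : ℝ) (v w : G.V) :
    (∑' n : ℕ, Apow G F β n v v = ⊤) ↔ (∑' n : ℕ, Apow G F β n w w = ⊤) := by
  obtain ⟨μ, -, hμs, hμr⟩ := hsc v w
  obtain ⟨δ, -, hδs, hδr⟩ := hsc w v
  exact ⟨tsum_Apow_eq_top_of_paths F β δ μ hδs hδr hμs hμr,
    tsum_Apow_eq_top_of_paths F β μ δ hμs hμr hδs hδr⟩
end
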